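/- Let G, F be formal power series over ℚ with G(0) = 1, F(0) = 0 and with the coefficient of x^1 in F nonzero, with Riordan triangle entries R(n,m) := [x^n]( G(x)·F(x)^m ). Work in (ℚ[[t]])[[y]], let X = x(t;y) be the element with zero constant term satisfying X − t·F(X) = y, and let H be the power series over ℚ with H(0) = 0 and formal derivative G. Define D̃(d,m) := (d+m)!·R(d+m,m), its exponential generating function E D̃(d,t) := Σ_{m≥0} D̃(d,m)·t^m/m!, and the double exponential generating function E E D̃(y,t) := Σ_{d≥0} E D̃(d,t)·y^{d+1}/(d+1)!. Then E E D̃(y,t) = H(x(t;y)) − H(0); equivalently, for all d, m ≥ 0 the coefficient of t^m·y^{d+1} in H(x(t;y)) equals (d+m)!·R(d+m,m)/( m!·(d+1)! ). -/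

import Mathlib

open PowerSeries

/-- Formal composition (substitution) `f(a)` of formal power series: substituting `a`
(which is intended to have zero constant term) into `f`. -/
noncomputable def PowerSeries.substitute {R : Type*} [CommRing R] (a f : R⟦X⟧) : R⟦X⟧ :=
  PowerSeries.mk fun n => ∑ k ∈ Finset.range (n + 1),
    PowerSeries.coeff (R := R) k f * PowerSeries.coeff (R := R) n (a ^ k)

/-!
Write `a = x(t;y)`, so `a = y + t·F(a)`. Differentiating this in `y` and in `t` and cancelling
the unit `1 - t·F'(a)` gives `∂ₜa = F(a)·∂_y a`, hence `∂ₜ P(a) = ∂_y Q(a)` whenever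
`Q' = P'·F`. On coefficients this reads `(k+1)·[t^(k+1) y^n] P(a) = (n+1)·[t^k y^(n+1)] Q(a)`,
and at `t = 0` we have `a = y`. Iterating `k` times yields Lagrange's expansion
`[t^k y^(n+1)] P(a) = (n+k)! / (k! (n+1)!) · [x^(n+k)] (P'·F^k)`; take `P = H`, `P' = G`.
-/

open scoped Nat

namespace PowerSeries

section CommRing

variable {R S : Type*} [CommRing R] [CommRing S]

theorem coeff_pow_eq_zero_of_lt {a : S⟦X⟧} (ha : constantCoeff a = 0) {n k : ℕ} (h : n < k) :
    coeff n (a ^ k) = 0 :=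
  coeff_of_lt_order _ <|
    lt_of_lt_of_le (by exact_mod_cast h) (le_order_pow_of_constantCoeff_eq_zero k ha)

theorem substitute_eq_subst {a : R⟦X⟧} (ha : constantCoeff a = 0) (f : R⟦X⟧) :
    substitute a f = f.subst a := by
  ext n
  rw [substitute, coeff_mk, coeff_subst' (HasSubst.of_constantCoeff_zero' ha),
    finsum_eq_sum_of_support_subset (s := Finset.range (n + 1))]
  · simp only [smul_eq_mul]
  · intro k hk
    by_contra hkn
    simp only [Finset.coe_range, Set.mem_Iio, not_lt] at hkn
    exact hk (by simp [coeff_pow_eq_zero_of_lt ha (Nat.lt_of_succ_le hkn)])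

theorem derivative_map (e : R →+* S) (f : R⟦X⟧) :
    d⁄dX S (map e f) = map e (d⁄dX R f) := by
  ext n
  simp [coeff_derivative]

/-- Stated for a generic ring because at `R⟦X⟧⟦X⟧`, instance search for `Derivation.leibniz`
finds `algebraPowerSeries`, which is not the algebra structure of `d⁄dX R⟦X⟧`. -/
theorem derivative_C_mul (c : R) (f : R⟦X⟧) : d⁄dX R (C c * f) = C c * d⁄dX R f := by
  rw [Derivation.leibniz, derivative_C, smul_zero, add_zero, smul_eq_mul]

variable [Algebra R S]

theorem subst_map_algebraMap {a : S⟦X⟧} (ha : HasSubst a) (f : R⟦X⟧) :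
    (map (algebraMap R S) f).subst a = f.subst a := by
  rw [map_algebraMap_eq_subst_X, subst_comp_subst_apply HasSubst.X' ha, subst_X ha]

theorem derivative_subst_of_algebra {a : S⟦X⟧} (ha : HasSubst a) (f : R⟦X⟧) :
    d⁄dX S (f.subst a) = (d⁄dX R f).subst a * d⁄dX S a := by
  rw [← subst_map_algebraMap ha, derivative_subst ha, derivative_map, subst_map_algebraMap ha]

theorem coeff_subst_trunc {a : S⟦X⟧} (ha : constantCoeff a = 0) (f : R⟦X⟧) {n N : ℕ}
    (h : n < N) : coeff n ((trunc N f : R⟦X⟧).subst a) = coeff n (f.subst a) := by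
  have hs := HasSubst.of_constantCoeff_zero' ha
  rw [coeff_subst' hs, coeff_subst' hs]
  refine finsum_congr fun k => ?_
  rcases lt_or_ge k N with hk | hk
  · rw [coeff_coe_trunc_of_lt hk]
  · rw [coeff_pow_eq_zero_of_lt ha (by omega), smul_zero, smul_zero]

theorem map_constantCoeff_subst {a : R⟦X⟧⟦X⟧} (ha : HasSubst a) (f : R⟦X⟧) :
    map constantCoeff (f.subst a) = f.subst (map constantCoeff a) := by
  have hf : map constantCoeff (map (algebraMap R R⟦X⟧) f) = f := by ext; simp
  rw [← subst_map_algebraMap ha]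
  exact (map_subst ha _).trans (by rw [hf]; rfl)

end CommRing

section InnerDerivative

variable {R : Type*} [CommRing R]

variable (R) in
/-- The derivative `∂/∂t` on `R⟦t⟧⟦y⟧`, taken coefficientwise. -/
noncomputable def innerDerivative : Derivation R R⟦X⟧⟦X⟧ R⟦X⟧⟦X⟧ :=
  Derivation.mk'
    { toFun := fun A => mk fun n => d⁄dX R (coeff n A)
      map_add' := fun A B => by ext n : 1; simp
      map_smul' := fun r A => by ext n : 1; simp }
    fun A B => by
      rw [smul_eq_mul, smul_eq_mul, mul_comm B]
      ext n : 1
      simp only [LinearMap.coe_mk, AddHom.coe_mk, coeff_mk, map_add, coeff_mul, map_sum,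
        Derivation.leibniz, smul_eq_mul, Finset.sum_add_distrib]
      simp only [mul_comm (coeff _ B)]

theorem coeff_innerDerivative (A : R⟦X⟧⟦X⟧) (n : ℕ) :
    coeff n (innerDerivative R A) = d⁄dX R (coeff n A) := by
  simp [innerDerivative]

theorem innerDerivative_C (c : R⟦X⟧) : innerDerivative R (C c) = C (d⁄dX R c) := by
  ext n : 1
  by_cases hn : n = 0 <;> simp [coeff_innerDerivative, coeff_C, hn]

theorem innerDerivative_X : innerDerivative R (X : R⟦X⟧⟦X⟧) = 0 := by
  ext n : 1
  simp [coeff_innerDerivative, coeff_X, apply_ite]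

theorem innerDerivative_subst {a : R⟦X⟧⟦X⟧} (ha : constantCoeff a = 0) (f : R⟦X⟧) :
    innerDerivative R (f.subst a) = (d⁄dX R f).subst a * innerDerivative R a := by
  have hs := HasSubst.of_constantCoeff_zero' ha
  ext n : 1
  have htrunc : d⁄dX R (trunc (n + 2) f : R⟦X⟧) = trunc (n + 1) (d⁄dX R f) := by
    rw [derivative_coe, trunc_derivative]
  calc coeff n (innerDerivative R (f.subst a))
      = coeff n (innerDerivative R ((trunc (n + 2) f : R⟦X⟧).subst a)) := by
        rw [coeff_innerDerivative, coeff_innerDerivative, coeff_subst_trunc ha f (by omega)]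
    _ = coeff n ((trunc (n + 1) (d⁄dX R f) : R⟦X⟧).subst a * innerDerivative R a) := by
        rw [subst_coe hs, Derivation.comp_aeval_eq, ← htrunc, derivative_coe, subst_coe hs,
          smul_eq_mul]
    _ = coeff n ((d⁄dX R f).subst a * innerDerivative R a) := by
        simp only [coeff_mul]
        refine Finset.sum_congr rfl fun p hp => ?_
        rw [coeff_subst_trunc ha _ (Finset.Nat.antidiagonal.fst_lt hp)]

end InnerDerivative

theorem exists_derivative_eq {K : Type*} [Field K] [CharZero K] (f : K⟦X⟧) :
    ∃ g, d⁄dX K g = f :=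
  ⟨mk fun n => coeff (n - 1) f / n, by ext n; simp [coeff_derivative]; field_simp⟩

section LagrangeExpansion

variable {R : Type*} [CommRing R] {F : R⟦X⟧} {a : R⟦X⟧⟦X⟧}

theorem map_constantCoeff_eq_X (heq : a - C X * F.subst a = X) : map constantCoeff a = X := by
  simpa using congrArg (map constantCoeff) heq

theorem innerDerivative_eq_subst_mul_derivative (ha : constantCoeff a = 0)
    (heq : a - C X * F.subst a = X) :
    innerDerivative R a = F.subst a * d⁄dX R⟦X⟧ a := by
  have hs := HasSubst.of_constantCoeff_zero' ha
  set u := 1 - C X * (d⁄dX R F).subst a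
  have hu : IsUnit u := by
    rw [isUnit_iff_constantCoeff, map_sub, map_one, map_mul, constantCoeff_C,
      isUnit_iff_constantCoeff]
    simp
  have ht : u * innerDerivative R a = F.subst a := by
    have := congrArg (innerDerivative R) heq
    rw [map_sub, Derivation.leibniz, innerDerivative_subst ha, innerDerivative_C,
      derivative_X, map_one, innerDerivative_X, smul_eq_mul, smul_eq_mul] at this
    linear_combination this
  have hy : u * d⁄dX R⟦X⟧ a = 1 := by
    have := congrArg (d⁄dX R⟦X⟧) heq
    rw [map_sub, derivative_C_mul, derivative_subst_of_algebra hs F, derivative_X] at this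
    linear_combination this
  exact hu.mul_left_cancel (by rw [ht, mul_left_comm, hy, mul_one])

theorem innerDerivative_subst_eq_derivative_subst (ha : constantCoeff a = 0)
    (heq : a - C X * F.subst a = X) {P Q : R⟦X⟧} (hPQ : d⁄dX R Q = d⁄dX R P * F) :
    innerDerivative R (P.subst a) = d⁄dX R⟦X⟧ (Q.subst a) := by
  have hs := HasSubst.of_constantCoeff_zero' ha
  rw [innerDerivative_subst ha, innerDerivative_eq_subst_mul_derivative ha heq,
    derivative_subst_of_algebra hs Q, hPQ, subst_mul hs, mul_assoc]

theorem coeff_succ_coeff_subst_mul (ha : constantCoeff a = 0)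
    (heq : a - C X * F.subst a = X) {P Q : R⟦X⟧} (hPQ : d⁄dX R Q = d⁄dX R P * F) (n k : ℕ) :
    coeff (k + 1) (coeff n (P.subst a)) * (k + 1) =
      coeff k (coeff (n + 1) (Q.subst a)) * (n + 1) := by
  have := congrArg (fun A => coeff k (coeff n A))
    (innerDerivative_subst_eq_derivative_subst ha heq hPQ)
  simp only [coeff_innerDerivative, coeff_derivative] at this
  rw [this, show ((n : R⟦X⟧) + 1) = C ((n : R) + 1) by simp, coeff_mul_C]

/-- Lagrange's expansion, multiplied through by `k! (n+1)!`. -/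
theorem coeff_coeff_subst_mul_factorial {K : Type*} [Field K] [CharZero K] {F : K⟦X⟧}
    {a : K⟦X⟧⟦X⟧} (ha : constantCoeff a = 0) (heq : a - C X * F.subst a = X) (P : K⟦X⟧)
    (n k : ℕ) :
    coeff k (coeff (n + 1) (P.subst a)) * ((k ! : K) * (n + 1)!) =
      (n + k)! * coeff (n + k) (d⁄dX K P * F ^ k) := by
  induction k generalizing P n with
  | zero =>
    have hP : coeff 0 (coeff (n + 1) (P.subst a)) = coeff (n + 1) P := by
      rw [coeff_zero_eq_constantCoeff_apply, ← coeff_map,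
        map_constantCoeff_subst (HasSubst.of_constantCoeff_zero' ha), map_constantCoeff_eq_X heq,
        X_subst]
    simp only [hP, Nat.add_zero, pow_zero, mul_one, coeff_derivative, Nat.factorial_succ]
    push_cast
    ring
  | succ k ih =>
    obtain ⟨Q, hQ⟩ := exists_derivative_eq (d⁄dX K P * F)
    calc coeff (k + 1) (coeff (n + 1) (P.subst a)) * ((k + 1)! * (n + 1)!)
        = coeff (k + 1) (coeff (n + 1) (P.subst a)) * (k + 1) * (k ! * (n + 1)!) := by
          push_cast [Nat.factorial_succ]
          ring
      _ = coeff k (coeff (n + 1 + 1) (Q.subst a)) * (k ! * (n + 1 + 1)!) := by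
          rw [coeff_succ_coeff_subst_mul ha heq hQ]
          push_cast [Nat.factorial_succ]
          ring
      _ = (n + (k + 1))! * coeff (n + (k + 1)) (d⁄dX K P * F ^ (k + 1)) := by
          rw [ih, hQ, mul_assoc, ← pow_succ', Nat.add_right_comm, Nat.add_assoc]

end LagrangeExpansion

end PowerSeries

theorem riordan_diagonal_double_egf_general (G F : ℚ⟦X⟧)
    (R : ℕ → ℕ → ℚ)
    (hR : ∀ n m : ℕ, R n m = coeff (R := ℚ) n (G * F ^ m))
    (H : ℚ⟦X⟧) (hH : H.derivativeFun = G)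
    (Xser : (ℚ⟦X⟧)⟦X⟧)
    (hX0 : constantCoeff (R := ℚ⟦X⟧) Xser = 0)
    (hXeq : Xser - PowerSeries.C (R := ℚ⟦X⟧) PowerSeries.X *
        PowerSeries.substitute Xser (PowerSeries.map (PowerSeries.C (R := ℚ)) F)
      = PowerSeries.X) :
    ∀ d m : ℕ,
      coeff (R := ℚ) m (coeff (R := ℚ⟦X⟧) (d + 1)
          (PowerSeries.substitute Xser (PowerSeries.map (PowerSeries.C (R := ℚ)) H)))
        = ((d + m).factorial : ℚ) * R (d + m) m
            / ((m.factorial : ℚ) * (d + 1).factorial) := by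
  have hsubst (f : ℚ⟦X⟧) : substitute Xser (map C f) = f.subst Xser := by
    rw [substitute_eq_subst hX0]
    exact subst_map_algebraMap (HasSubst.of_constantCoeff_zero' hX0) f
  rw [hsubst] at hXeq
  intro d m
  rw [hsubst, hR, eq_div_iff (by positivity), coeff_coeff_subst_mul_factorial hX0 hXeq,
    show d⁄dX ℚ H = G from hH]

/-- **Double e.g.f. for diagonals of a Riordan triangle.**  Let `R = (G, F)` be a
Riordan triangle, with entries `R(n,m) = [x^n](G·F^m)`.  Let `X = x(t;y)` be the series
in `(ℚ[[t]])[[y]]` with zero constant term satisfying `X − t·F(X) = y`, and let `H` be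
the antiderivative of `G` with `H(0) = 0`.  With `D̃(d,m) = (d+m)!·R(d+m,m)`, the double
exponential generating function `EED̃(y,t) = Σ_d (Σ_m D̃(d,m)·t^m/m!)·y^(d+1)/(d+1)!`
equals `H(x(t;y)) − H(0)`; i.e. the coefficient of `t^m·y^(d+1)` in `H(x(t;y))` is
`(d+m)!·R(d+m,m)/(m!·(d+1)!)`. -/
theorem riordan_diagonal_double_egf (G F : ℚ⟦X⟧)
    (hG : constantCoeff (R := ℚ) G = 1) (hF0 : constantCoeff (R := ℚ) F = 0) (hF1 : coeff (R := ℚ) 1 F ≠ 0)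
    (R : ℕ → ℕ → ℚ)
    (hR : ∀ n m : ℕ, R n m = coeff (R := ℚ) n (G * F ^ m))
    (H : ℚ⟦X⟧) (hH0 : constantCoeff (R := ℚ) H = 0) (hH : H.derivativeFun = G)
    (Xser : (ℚ⟦X⟧)⟦X⟧)
    (hX0 : constantCoeff (R := ℚ⟦X⟧) Xser = 0)
    (hXeq : Xser - PowerSeries.C (R := ℚ⟦X⟧) PowerSeries.X *
        PowerSeries.substitute Xser (PowerSeries.map (PowerSeries.C (R := ℚ)) F)
      = PowerSeries.X) :
    ∀ d m : ℕ,
      coeff (R := ℚ) m (coeff (R := ℚ⟦X⟧) (d + 1)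
          (PowerSeries.substitute Xser (PowerSeries.map (PowerSeries.C (R := ℚ)) H)))
        = ((d + m).factorial : ℚ) * R (d + m) m
            / ((m.factorial : ℚ) * (d + 1).factorial) :=
  riordan_diagonal_double_egf_general G F R hR H hH Xser hX0 hXeq
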